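/- Let Z be a proper geodesic δ-hyperbolic space, x ∈ Z, r > 0, and let y, z ∈ Z satisfy d(x,y) < r − 10δ and d(x,z) < r − 10δ. Let σ, σ': [0,∞) → Z be geodesic rays with σ(0) = σ'(0) = x and extended Gromov product ⟨σ(∞), σ'(∞)⟩_x > r. Then |β_σ(y,z) − β_{σ'}(y,z)| ≤ 72δ. -/

import Mathlib

open Filter Metric Set

noncomputable def gromovProd {Z : Type*} [MetricSpace Z] (x y z : Z) : ℝ :=
  (dist x y + dist x z - dist y z) / 2

/-- `Z` is δ-hyperbolic in the Gromov product sense. -/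
def IsDeltaHyperbolic (Z : Type*) [MetricSpace Z] (δ : ℝ) : Prop :=
  ∀ w x y z : Z, min (gromovProd x w y) (gromovProd x y z) - δ ≤ gromovProd x w z

/-- `f` parametrizes a geodesic segment from `x` to `y` by arclength on `[0, dist x y]`. -/
def IsGeodesicSegment {Z : Type*} [MetricSpace Z] (f : ℝ → Z) (x y : Z) : Prop :=
  f 0 = x ∧ f (dist x y) = y ∧
    ∀ s ∈ Set.Icc (0:ℝ) (dist x y), ∀ t ∈ Set.Icc (0:ℝ) (dist x y),
      dist (f s) (f t) = |s - t|

/-- `Z` is a geodesic metric space. -/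
def IsGeodesicSpace (Z : Type*) [MetricSpace Z] : Prop :=
  ∀ x y : Z, ∃ f : ℝ → Z, IsGeodesicSegment f x y

/-- The image of the geodesic segment `[x,y]` parametrized by `f`. -/
def segImage {Z : Type*} [MetricSpace Z] (f : ℝ → Z) (x y : Z) : Set Z :=
  f '' Set.Icc 0 (dist x y)

/-- A geodesic ray: an isometric embedding of `[0,∞)`. -/
def IsGeodesicRay {Z : Type*} [MetricSpace Z] (σ : ℝ → Z) : Prop :=
  ∀ s t : ℝ, 0 ≤ s → 0 ≤ t → dist (σ s) (σ t) = |s - t|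

/-- A bi-infinite geodesic: an isometric embedding of `ℝ`. -/
def IsBiInfGeodesic {Z : Type*} [MetricSpace Z] (γ : ℝ → Z) : Prop :=
  ∀ s t : ℝ, dist (γ s) (γ t) = |s - t|

/-- Two geodesic rays are asymptotic (same endpoint at infinity):
their images are at finite Hausdorff distance. -/
def AsymptoticRays {Z : Type*} [MetricSpace Z] (σ σ' : ℝ → Z) : Prop :=
  EMetric.hausdorffEdist (σ '' Set.Ici 0) (σ' '' Set.Ici 0) ≠ ⊤

/-- Extended Gromov product (with respect to `x`) of the two boundary points
represented by the geodesic rays `σ`, `σ'`. -/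
noncomputable def extGP {Z : Type*} [MetricSpace Z] (x : Z) (σ σ' : ℝ → Z) : EReal :=
  Filter.liminf (fun p : ℝ × ℝ => ((gromovProd x (σ p.1) (σ' p.2) : ℝ) : EReal))
    (Filter.atTop ×ˢ Filter.atTop)

/-- Extended Gromov product (with respect to `x`) of a point `y ∈ Z` and the boundary
point represented by the geodesic ray `σ`. -/
noncomputable def ptRayGP {Z : Type*} [MetricSpace Z] (x y : Z) (σ : ℝ → Z) : EReal :=
  Filter.liminf (fun t : ℝ => ((gromovProd x y (σ t) : ℝ) : EReal)) Filter.atTop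

/-- The visual quasi-metric `d_x(ξ,η) = exp(-2⟨ξ,η⟩_x)` on the Gromov boundary,
for boundary points represented by geodesic rays. -/
noncomputable def visDist {Z : Type*} [MetricSpace Z] (x : Z) (σ σ' : ℝ → Z) : ℝ :=
  if extGP x σ σ' = ⊤ then 0 else Real.exp (-2 * (extGP x σ σ').toReal)

/-!
A point `w` with `d(x, w) ≤ ⟨p, q⟩_x` cannot tell `p` from `q`: the δ-inequality applied to
`w, p, q` (both ways round) gives `|⟨w, p⟩_x - ⟨w, q⟩_x| ≤ δ`, since `⟨w, ·⟩_x ≤ d(x, w)`.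
Since `d(y, p) - d(z, p) = d(x, y) - d(x, z) - 2⟨y, p⟩_x + 2⟨z, p⟩_x`, this moves the
difference of distances to `y` and `z` by at most `4δ` when `p = σ s` is replaced by
`q = σ' t`. For large `s, t` the product `⟨σ s, σ' t⟩_x` exceeds `r`, so the two Busemann
limits are `4δ ≤ 72δ` apart.
-/

section GromovProduct

variable {Z : Type*} [MetricSpace Z]

lemma gromovProd_comm (x y z : Z) : gromovProd x y z = gromovProd x z y := by
  simp only [gromovProd, dist_comm y z]
  ring

lemma gromovProd_le_dist (x w y : Z) : gromovProd x w y ≤ dist x w := by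
  have := dist_triangle x w y
  simp only [gromovProd]
  linarith

lemma dist_sub_dist_eq_gromovProd (x y z p : Z) :
    dist y p - dist z p = dist x y - dist x z - 2 * gromovProd x y p + 2 * gromovProd x z p := by
  simp only [gromovProd]
  ring

end GromovProduct

namespace IsDeltaHyperbolic

variable {Z : Type*} [MetricSpace Z] {δ : ℝ}

lemma nonneg (hhyp : IsDeltaHyperbolic Z δ) (x : Z) : 0 ≤ δ := by
  have h := hhyp x x x x
  simp only [gromovProd, dist_self, min_self] at h
  linarith

lemma gromovProd_le_add (hhyp : IsDeltaHyperbolic Z δ) {x w p q : Z}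
    (hw : dist x w ≤ gromovProd x p q) : gromovProd x w p ≤ gromovProd x w q + δ := by
  have h := hhyp w x p q
  rw [min_eq_left ((gromovProd_le_dist x w p).trans hw)] at h
  linarith

lemma abs_gromovProd_sub_le (hhyp : IsDeltaHyperbolic Z δ) {x w p q : Z}
    (hw : dist x w ≤ gromovProd x p q) :
    |gromovProd x w p - gromovProd x w q| ≤ δ := by
  have hpq := hhyp.gromovProd_le_add hw
  have hqp := hhyp.gromovProd_le_add (hw.trans_eq (gromovProd_comm x p q))
  rw [abs_le]
  constructor <;> linarith

lemma abs_dist_sub_dist_sub_le (hhyp : IsDeltaHyperbolic Z δ) {x y z p q : Z}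
    (hy : dist x y ≤ gromovProd x p q) (hz : dist x z ≤ gromovProd x p q) :
    |(dist y p - dist z p) - (dist y q - dist z q)| ≤ 4 * δ := by
  have ky := abs_le.mp (hhyp.abs_gromovProd_sub_le hy)
  have kz := abs_le.mp (hhyp.abs_gromovProd_sub_le hz)
  rw [dist_sub_dist_eq_gromovProd x y z p, dist_sub_dist_eq_gromovProd x y z q, abs_le]
  constructor <;> linarith [ky.1, ky.2, kz.1, kz.2]

lemma abs_busemann_sub_le (hhyp : IsDeltaHyperbolic Z δ) {x y z : Z} {r : ℝ}
    (hy : dist x y ≤ r) (hz : dist x z ≤ r) {σ σ' : ℝ → Z} (hgp : (r : EReal) < extGP x σ σ')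
    {b b' : ℝ}
    (hb : Tendsto (fun t => dist y (σ t) - dist z (σ t)) atTop (nhds b))
    (hb' : Tendsto (fun t => dist y (σ' t) - dist z (σ' t)) atTop (nhds b')) :
    |b - b'| ≤ 4 * δ := by
  have hlim : Tendsto
      (fun p : ℝ × ℝ => (dist y (σ p.1) - dist z (σ p.1)) - (dist y (σ' p.2) - dist z (σ' p.2)))
      (atTop ×ˢ atTop) (nhds (b - b')) :=
    (hb.comp tendsto_fst).sub (hb'.comp tendsto_snd)
  refine le_of_tendsto hlim.abs ?_
  filter_upwards [eventually_lt_of_lt_liminf hgp] with p hp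
  have hr : r < gromovProd x (σ p.1) (σ' p.2) := EReal.coe_lt_coe_iff.mp hp
  exact hhyp.abs_dist_sub_dist_sub_le (hy.trans hr.le) (hz.trans hr.le)

end IsDeltaHyperbolic

theorem stmt8_general {Z : Type*} [MetricSpace Z] {δ : ℝ}
    (hhyp : IsDeltaHyperbolic Z δ)
    (x : Z) (r : ℝ)
    (y z : Z) (hy : dist x y < r - 10 * δ) (hz : dist x z < r - 10 * δ)
    (σ σ' : ℝ → Z)
    (hgp : (r : EReal) < extGP x σ σ')
    (b b' : ℝ)
    (hb : Filter.Tendsto (fun t => dist y (σ t) - dist z (σ t)) Filter.atTop (nhds b))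
    (hb' : Filter.Tendsto (fun t => dist y (σ' t) - dist z (σ' t)) Filter.atTop (nhds b')) :
    |b - b'| ≤ 72 * δ := by
  have hδ := hhyp.nonneg x
  have hbound := hhyp.abs_busemann_sub_le (by linarith) (by linarith) hgp hb hb'
  linarith

/-- Stability of Busemann functions under change of endpoint: if two geodesic rays from
`x` have Gromov product at infinity `> r` and `y, z` are within `r − 10δ` of `x`, the
corresponding Busemann cocycles differ by at most `72δ`. -/
theorem stmt8 {Z : Type*} [MetricSpace Z] [ProperSpace Z] {δ : ℝ}
    (hgeo : IsGeodesicSpace Z) (hhyp : IsDeltaHyperbolic Z δ)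
    (x : Z) (r : ℝ) (hr : 0 < r)
    (y z : Z) (hy : dist x y < r - 10 * δ) (hz : dist x z < r - 10 * δ)
    (σ σ' : ℝ → Z) (hσ : IsGeodesicRay σ) (hσ' : IsGeodesicRay σ')
    (h0 : σ 0 = x) (h0' : σ' 0 = x)
    (hgp : (r : EReal) < extGP x σ σ')
    (b b' : ℝ)
    (hb : Filter.Tendsto (fun t => dist y (σ t) - dist z (σ t)) Filter.atTop (nhds b))
    (hb' : Filter.Tendsto (fun t => dist y (σ' t) - dist z (σ' t)) Filter.atTop (nhds b')) :
    |b - b'| ≤ 72 * δ :=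
  stmt8_general hhyp x r y z hy hz σ σ' hgp b b' hb hb'
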